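/- The function f(μ) = (2μ - sin(2μ))/(1 - cos(2μ)) is strictly monotone increasing on (0, π/2). -/

import Mathlib

/-!
With `x = 2μ` the function is `g x = (x - sin x) / (1 - cos x)` on `(0, π)`. The numerator of `g'`
is `2 - 2 cos x - x sin x`, which at `x = 2t` factors as `4 sin t (sin t - t cos t)`; this is
positive on `(0, π/2)` because `t < tan t` there.
-/

open Real Set

lemma mul_cos_lt_sin {x : ℝ} (h0 : 0 < x) (h1 : x < π / 2) : x * cos x < sin x := by
  have hcos : 0 < cos x := cos_pos_of_mem_Ioo ⟨by linarith [pi_pos], h1⟩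
  have htan := lt_tan h0 h1
  rwa [tan_eq_sin_div_cos, lt_div_iff₀ hcos] at htan

lemma cos_lt_one_of_mem_Ioo {x : ℝ} (hx : x ∈ Ioo 0 π) : cos x < 1 := by
  simpa using cos_lt_cos_of_nonneg_of_le_pi le_rfl hx.2.le hx.1

lemma two_sub_two_mul_cos_sub_mul_sin_pos {x : ℝ} (hx : x ∈ Ioo 0 π) :
    0 < 2 - 2 * cos x - x * sin x := by
  obtain ⟨t, rfl⟩ : ∃ t, x = 2 * t := ⟨x / 2, by ring⟩
  obtain ⟨ht0, htπ⟩ : 0 < t ∧ t < π / 2 := ⟨by linarith [hx.1], by linarith [hx.2]⟩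
  have hsin : 0 < sin t := sin_pos_of_pos_of_lt_pi ht0 (by linarith)
  have hgap : 0 < sin t - t * cos t := sub_pos.2 (mul_cos_lt_sin ht0 htπ)
  have hfactor : 2 - 2 * cos (2 * t) - 2 * t * sin (2 * t) = 4 * sin t * (sin t - t * cos t) := by
    rw [cos_two_mul', sin_two_mul]
    linear_combination -2 * sin_sq_add_cos_sq t
  rw [hfactor]
  positivity

lemma hasDerivAt_sub_sin_div_one_sub_cos {x : ℝ} (hx : cos x ≠ 1) :
    HasDerivAt (fun y => (y - sin y) / (1 - cos y))
      ((2 - 2 * cos x - x * sin x) / (1 - cos x) ^ 2) x := by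
  have hnum : HasDerivAt (fun y => y - sin y) (1 - cos x) x :=
    (hasDerivAt_id x).sub (hasDerivAt_sin x)
  have hden : HasDerivAt (fun y => 1 - cos y) (sin x) x := by
    simpa using (hasDerivAt_cos x).const_sub 1
  refine (hnum.div hden (sub_ne_zero.2 hx.symm)).congr_deriv ?_
  congr 1
  linear_combination sin_sq_add_cos_sq x

theorem strictMonoOn_sub_sin_div_one_sub_cos :
    StrictMonoOn (fun x => (x - sin x) / (1 - cos x)) (Ioo 0 π) := by
  have hderiv {x : ℝ} (hx : x ∈ Ioo 0 π) :=
    hasDerivAt_sub_sin_div_one_sub_cos (cos_lt_one_of_mem_Ioo hx).ne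
  refine strictMonoOn_of_hasDerivWithinAt_pos (convex_Ioo 0 π)
    (f' := fun x => (2 - 2 * cos x - x * sin x) / (1 - cos x) ^ 2)
    (fun x hx => (hderiv hx).continuousAt.continuousWithinAt) (fun x hx => ?_) (fun x hx => ?_)
  · rw [interior_Ioo] at hx ⊢
    exact (hderiv hx).hasDerivWithinAt
  · rw [interior_Ioo] at hx
    have hden : 0 < 1 - cos x := sub_pos.2 (cos_lt_one_of_mem_Ioo hx)
    exact div_pos (two_sub_two_mul_cos_sub_mul_sin_pos hx) (pow_pos hden 2)

theorem dru_power_factor_ratio_strictMonoOn :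
    StrictMonoOn (fun μ : ℝ => (2 * μ - Real.sin (2 * μ)) / (1 - Real.cos (2 * μ)))
      (Set.Ioo 0 (π / 2)) := by
  have hdouble : StrictMonoOn (fun μ : ℝ => 2 * μ) (Ioo 0 (π / 2)) :=
    (strictMono_mul_left_of_pos two_pos).strictMonoOn _
  have hmaps : MapsTo (fun μ : ℝ => 2 * μ) (Ioo 0 (π / 2)) (Ioo 0 π) :=
    fun μ hμ => ⟨by linarith [hμ.1], by linarith [hμ.2]⟩
  exact strictMonoOn_sub_sin_div_one_sub_cos.comp hdouble hmaps
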